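/- If φ is an analytic self-map of the unit disc with φ(0) = 0, then the composition operator C_φ on H²_h(D) satisfies 1 ≤ ‖C_φ‖ ≤ 4. -/

import Mathlib

noncomputable section
open Complex Metric Filter Set MeasureTheory
open scoped Real ComplexConjugate ComplexInnerProductSpace

/-- The underlying `ℓ²` space of square-summable complex sequences. -/
abbrev ℓ2 : Type := lp (fun _ : ℕ => ℂ) 2

/-- The Hilbert space `H²ₕ(𝔻)` of complex-valued harmonic functions on the unit disc,
represented by the pair of coefficient sequences `(aₙ)ₙ` and `(conj bₙ)ₙ`,
with the `L²` product norm. -/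
abbrev Hh : Type := WithLp 2 (ℓ2 × ℓ2)

/-- The analytic-part Taylor coefficients `aₙ` of `f = h + conj g`. -/
def aCoef (f : Hh) : ℕ → ℂ := fun n => (WithLp.equiv 2 (ℓ2 × ℓ2) f).1 n

/-- The co-analytic-part Taylor coefficients `bₙ` of `f = h + conj g`. -/
def bCoef (f : Hh) : ℕ → ℂ := fun n => conj ((WithLp.equiv 2 (ℓ2 × ℓ2) f).2 n)

/-- The harmonic function on the disc determined by an element of `H²ₕ(𝔻)`:
`f(z) = Σ aₙ zⁿ + conj (Σ bₙ zⁿ)`. -/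
def toFun (f : Hh) (z : ℂ) : ℂ :=
  (∑' n : ℕ, aCoef f n * z ^ n) + conj (∑' n : ℕ, bCoef f n * z ^ n)

lemma memℓ2_pow {α : ℂ} (h : ‖α‖ < 1) : Memℓp (fun n : ℕ => α ^ n) 2 := by
  apply memℓp_gen
  have h2 : Summable (fun n : ℕ => (‖α‖ ^ 2) ^ n) :=
    summable_geometric_of_lt_one (by positivity) (by nlinarith [norm_nonneg α])
  refine h2.congr fun n => ?_
  rw [show ((2 : ENNReal)).toReal = ((2 : ℕ) : ℝ) by norm_num, Real.rpow_natCast, norm_pow,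
    ← pow_mul, ← pow_mul, Nat.mul_comm]

/-- The reproducing kernel `K_α(z) = 1/(1 - conj α · z) + 1/(1 - α · conj z)` of `H²ₕ(𝔻)`,
as an element of `Hh` (junk value `0` when `α` is outside the unit disc). -/
def kernel (α : ℂ) : Hh :=
  if h : ‖α‖ < 1 then
    (WithLp.equiv 2 (ℓ2 × ℓ2)).symm
      (⟨fun n => (conj α) ^ n, memℓ2_pow (by simpa using h)⟩,
       ⟨fun n => α ^ n, memℓ2_pow h⟩)
  else 0

/-- `F = C_φ f`, i.e. `F` is obtained from `f = h + conj g` by composing each part with `φ`: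
on the unit disc, the analytic part of `F` is `h ∘ φ` and the co-analytic part is `conj (g ∘ φ)`. -/
def Represents (φ : ℂ → ℂ) (f F : Hh) : Prop :=
  ∀ z ∈ ball (0 : ℂ) 1,
    ((∑' n : ℕ, aCoef F n * z ^ n) = ∑' n : ℕ, aCoef f n * (φ z) ^ n) ∧
    ((∑' n : ℕ, bCoef F n * z ^ n) = ∑' n : ℕ, bCoef f n * (φ z) ^ n)

/-- The Poisson kernel `P_r(x)` for the unit disc. -/
def poisson (r x : ℝ) : ℝ := (1 - r ^ 2) / (1 - 2 * r * Real.cos x + r ^ 2)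

/-- A real-valued function is harmonic on a set: it is `C²` there and its Laplacian vanishes. -/
def HarmonicOnDisc (u : ℂ → ℝ) (s : Set ℂ) : Prop :=
  ContDiffOn ℝ 2 u s ∧
    ∀ z ∈ s, iteratedFDeriv ℝ 2 u z ![1, 1] + iteratedFDeriv ℝ 2 u z ![Complex.I, Complex.I] = 0

/-!
Littlewood's subordination principle, in coefficient form. Let `h = Σ aₙ zⁿ` with `(aₙ) ∈ ℓ²`
and let `h_N = Σ a_{n+N} zⁿ` be its tails, so that `h_N = a_N + z · h_{N+1}`. On a circle
`|z| = r < 1`, the mean of `|a_N + φ · (h_{N+1} ∘ φ)|²` is `|a_N|²` plus the mean of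
`|φ|² |h_{N+1} ∘ φ|²`, because `φ (0) = 0` makes the cross term the real part of the mean of a
holomorphic function vanishing at the centre. As `|φ| ≤ 1`, telescoping and Schwarz's lemma
(which makes the tails `h_N ∘ φ` uniformly small on the circle) bound the mean of `|h ∘ φ|²`
by `Σ |aₙ|²`. For `φ = id` the same identity shows that `Σ_{n<N} |cₙ|² r²ⁿ` is at most the
mean of `|Σ cₙ zⁿ|²`; applied to `Σ cₙ zⁿ = h ∘ φ` and letting `r → 1`, the coefficients of
`h ∘ φ` have `ℓ²` norm at most that of `(aₙ)`. Applied to both the analytic and the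
co-analytic part, this gives `‖C_φ‖ ≤ 1 ≤ 4`, while `C_φ 1 = 1` gives `‖C_φ‖ ≥ 1`.
-/

open Real (circleAverage)
open scoped Topology

namespace Littlewood

section SquareSummable

variable {a : ℕ → ℂ}

lemma tsum_mul_zero_pow : ∑' n, a n * 0 ^ n = a 0 := by
  rw [tsum_eq_single 0 fun n hn => by simp [hn]]
  simp

lemma norm_le_sqrt_tsum_sq (ha : Summable fun n => ‖a n‖ ^ 2) (n : ℕ) :
    ‖a n‖ ≤ √(∑' m, ‖a m‖ ^ 2) :=
  Real.le_sqrt_of_sq_le (ha.le_tsum n fun _ _ => sq_nonneg _)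

lemma norm_mul_pow_le (ha : Summable fun n => ‖a n‖ ^ 2) {z : ℂ} (n : ℕ) :
    ‖a n * z ^ n‖ ≤ √(∑' m, ‖a m‖ ^ 2) * ‖z‖ ^ n := by
  rw [norm_mul, norm_pow]
  gcongr
  exact norm_le_sqrt_tsum_sq ha n

lemma summable_mul_pow (ha : Summable fun n => ‖a n‖ ^ 2) {z : ℂ} (hz : ‖z‖ < 1) :
    Summable fun n => a n * z ^ n :=
  .of_norm_bounded ((summable_geometric_of_lt_one (norm_nonneg z) hz).mul_left _)
    (norm_mul_pow_le ha)

lemma norm_tsum_mul_pow_le (ha : Summable fun n => ‖a n‖ ^ 2) {z : ℂ} {ρ : ℝ}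
    (hz : ‖z‖ ≤ ρ) (hρ : ρ < 1) :
    ‖∑' n, a n * z ^ n‖ ≤ √(∑' m, ‖a m‖ ^ 2) / (1 - ρ) := by
  have hρ0 : 0 ≤ ρ := (norm_nonneg z).trans hz
  calc ‖∑' n, a n * z ^ n‖ ≤ ∑' n, √(∑' m, ‖a m‖ ^ 2) * ρ ^ n :=
        tsum_of_norm_bounded ((hasSum_geometric_of_lt_one hρ0 hρ).mul_left _).summable.hasSum
          fun n => (norm_mul_pow_le ha n).trans (by gcongr)
    _ = √(∑' m, ‖a m‖ ^ 2) / (1 - ρ) := by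
        rw [tsum_mul_left, tsum_geometric_of_lt_one hρ0 hρ, div_eq_mul_inv]

lemma differentiableOn_tsum_mul_pow (ha : Summable fun n => ‖a n‖ ^ 2) :
    DifferentiableOn ℂ (fun z => ∑' n, a n * z ^ n) (ball 0 1) := by
  have hrad : ((1 : NNReal) : ENNReal) ≤ (FormalMultilinearSeries.ofScalars ℂ a).radius :=
    FormalMultilinearSeries.le_radius_of_bound _ (C := √(∑' m, ‖a m‖ ^ 2)) fun n => by
      simpa using norm_le_sqrt_tsum_sq ha n
  have hsum := ((FormalMultilinearSeries.ofScalars ℂ a).hasFPowerSeriesOnBall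
    (lt_of_lt_of_le (by norm_num) hrad)).differentiableOn
  rw [← FormalMultilinearSeries.ofScalarsSum,
    FormalMultilinearSeries.ofScalarsSum_eq_tsum] at hsum
  have hball : ball (0 : ℂ) 1 ⊆ eball 0 (FormalMultilinearSeries.ofScalars ℂ a).radius := by
    simpa only [eball_coe, NNReal.coe_one] using eball_subset_eball (x := (0 : ℂ)) hrad
  simpa only [smul_eq_mul] using hsum.mono hball

lemma tsum_mul_pow_eq_add_mul (ha : Summable fun n => ‖a n‖ ^ 2) {z : ℂ} (hz : ‖z‖ < 1) :
    ∑' n, a n * z ^ n = a 0 + z * ∑' n, a (n + 1) * z ^ n := by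
  rw [(summable_mul_pow ha hz).tsum_eq_zero_add, ← tsum_mul_left]
  simp only [pow_zero, mul_one, pow_succ]
  congr 1
  exact tsum_congr fun n => by ring

end SquareSummable

lemma circleAverage_norm_sq_const_add {w : ℂ → ℂ} {c : ℂ} {R : ℝ}
    (hw : DifferentiableOn ℂ w (closedBall c |R|)) (hwc : w c = 0) (α : ℂ) :
    circleAverage (fun z => ‖α + w z‖ ^ 2) c R =
      ‖α‖ ^ 2 + circleAverage (fun z => ‖w z‖ ^ 2) c R := by
  have hcont : ContinuousOn w (sphere c |R|) := hw.continuousOn.mono sphere_subset_closedBall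
  have hcross : circleAverage (fun z => 2 * (conj α * w z).re) c R = 0 := by
    have hg : DifferentiableOn ℂ (fun z => 2 * conj α * w z) (closedBall c |R|) :=
      hw.const_mul _
    have hmean := (hg.diffContOnCl_ball subset_rfl).circleAverage
    have hre := Complex.reCLM.circleAverage_comp_comm
      (ContinuousOn.circleIntegrable' (hg.continuousOn.mono sphere_subset_closedBall))
    simp only [hmean, hwc, mul_zero, map_zero] at hre
    convert hre using 3 with z
    simp [mul_assoc]
  have hsplit : ∀ z, ‖α + w z‖ ^ 2 = ‖α‖ ^ 2 + (2 * (conj α * w z).re + ‖w z‖ ^ 2) := by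
    intro z
    simp only [← Complex.normSq_eq_norm_sq, Complex.normSq_add, Complex.mul_re,
      Complex.conj_re, Complex.conj_im]
    ring
  simp_rw [hsplit]
  rw [Real.circleAverage_fun_add, Real.circleAverage_const, Real.circleAverage_fun_add, hcross,
    zero_add]
  all_goals exact ContinuousOn.circleIntegrable' (by fun_prop)

section Subordination

variable {ψ : ℂ → ℂ} {r : ℝ} {a : ℕ → ℂ}

lemma continuousOn_tsum_mul_pow_comp (hψ : ContinuousOn ψ (ball 0 1))
    (hψ1 : MapsTo ψ (ball 0 1) (ball 0 1)) (ha : Summable fun n => ‖a n‖ ^ 2) :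
    ContinuousOn (fun z => ∑' n, a n * ψ z ^ n) (ball 0 1) :=
  (differentiableOn_tsum_mul_pow ha).continuousOn.comp hψ hψ1

lemma circleAverage_norm_sq_tsum_comp (hψ : DifferentiableOn ℂ ψ (ball 0 1))
    (hψ1 : MapsTo ψ (ball 0 1) (ball 0 1)) (hψ0 : ψ 0 = 0) (hr : |r| < 1)
    (ha : Summable fun n => ‖a n‖ ^ 2) :
    circleAverage (fun z => ‖∑' n, a n * ψ z ^ n‖ ^ 2) 0 r =
      ‖a 0‖ ^ 2 + circleAverage
        (fun z => ‖ψ z‖ ^ 2 * ‖∑' n, a (n + 1) * ψ z ^ n‖ ^ 2) 0 r := by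
  have hball : closedBall (0 : ℂ) |r| ⊆ ball 0 1 := closedBall_subset_ball hr
  have ha' : Summable fun n => ‖a (n + 1)‖ ^ 2 := (summable_nat_add_iff 1).2 ha
  have hw : DifferentiableOn ℂ (fun z => ψ z * ∑' n, a (n + 1) * ψ z ^ n) (closedBall 0 |r|) :=
    (hψ.mul ((differentiableOn_tsum_mul_pow ha').comp hψ hψ1)).mono hball
  calc circleAverage (fun z => ‖∑' n, a n * ψ z ^ n‖ ^ 2) 0 r
      = circleAverage (fun z => ‖a 0 + ψ z * ∑' n, a (n + 1) * ψ z ^ n‖ ^ 2) 0 r :=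
        Real.circleAverage_congr_sphere fun z hz => by
          rw [tsum_mul_pow_eq_add_mul ha
            (mem_ball_zero_iff.1 (hψ1 (hball (sphere_subset_closedBall hz))))]
    _ = ‖a 0‖ ^ 2 + circleAverage
          (fun z => ‖ψ z‖ ^ 2 * ‖∑' n, a (n + 1) * ψ z ^ n‖ ^ 2) 0 r := by
        rw [circleAverage_norm_sq_const_add hw (by simp [hψ0])]
        simp only [norm_mul, mul_pow]

lemma sum_range_norm_sq_mul_pow_le_circleAverage (hr : |r| < 1)
    (ha : Summable fun n => ‖a n‖ ^ 2) (N : ℕ) :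
    ∑ n ∈ Finset.range N, ‖a n‖ ^ 2 * r ^ (2 * n) ≤
      circleAverage (fun z => ‖∑' n, a n * z ^ n‖ ^ 2) 0 r := by
  induction N generalizing a with
  | zero => simpa using Real.circleAverage_nonneg_of_nonneg fun _ _ => by positivity
  | succ N ih =>
    have ha' : Summable fun n => ‖a (n + 1)‖ ^ 2 := (summable_nat_add_iff 1).2 ha
    have hstep := circleAverage_norm_sq_tsum_comp differentiableOn_id (mapsTo_id _) rfl hr ha
    have hscale : circleAverage (fun z => ‖z‖ ^ 2 * ‖∑' n, a (n + 1) * z ^ n‖ ^ 2) 0 r =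
        r ^ 2 * circleAverage (fun z => ‖∑' n, a (n + 1) * z ^ n‖ ^ 2) 0 r := by
      rw [← smul_eq_mul, ← Real.circleAverage_fun_smul]
      refine Real.circleAverage_congr_sphere fun z hz => ?_
      rw [mem_sphere_zero_iff_norm.1 hz, sq_abs, smul_eq_mul]
    simp only [id] at hstep
    rw [hstep, hscale, Finset.sum_range_succ']
    have hsum : ∑ n ∈ Finset.range N, ‖a (n + 1)‖ ^ 2 * r ^ (2 * (n + 1)) =
        r ^ 2 * ∑ n ∈ Finset.range N, ‖a (n + 1)‖ ^ 2 * r ^ (2 * n) := by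
      rw [Finset.mul_sum]
      exact Finset.sum_congr rfl fun n _ => by ring
    rw [hsum, mul_zero, pow_zero, mul_one, add_comm]
    gcongr
    exact ih ha'

lemma circleAverage_norm_sq_tsum_comp_le_add (hψ : DifferentiableOn ℂ ψ (ball 0 1))
    (hψ1 : MapsTo ψ (ball 0 1) (ball 0 1)) (hψ0 : ψ 0 = 0) (hr : |r| < 1)
    (ha : Summable fun n => ‖a n‖ ^ 2) (N : ℕ) :
    circleAverage (fun z => ‖∑' n, a n * ψ z ^ n‖ ^ 2) 0 r ≤
      ∑ n ∈ Finset.range N, ‖a n‖ ^ 2 +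
        circleAverage (fun z => ‖∑' n, a (n + N) * ψ z ^ n‖ ^ 2) 0 r := by
  induction N generalizing a with
  | zero => simp
  | succ N ih =>
    have ha' : Summable fun n => ‖a (n + 1)‖ ^ 2 := (summable_nat_add_iff 1).2 ha
    have hsphere : sphere (0 : ℂ) |r| ⊆ ball 0 1 := sphere_subset_ball hr
    have hcont := (continuousOn_tsum_mul_pow_comp hψ.continuousOn hψ1 ha').mono hsphere
    have hψcont := hψ.continuousOn.mono hsphere
    have hshrink : circleAverage (fun z => ‖ψ z‖ ^ 2 * ‖∑' n, a (n + 1) * ψ z ^ n‖ ^ 2) 0 r ≤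
        circleAverage (fun z => ‖∑' n, a (n + 1) * ψ z ^ n‖ ^ 2) 0 r := by
      refine Real.circleAverage_mono (ContinuousOn.circleIntegrable' (by fun_prop))
        (ContinuousOn.circleIntegrable' (by fun_prop)) fun z hz => ?_
      have hψz : ‖ψ z‖ < 1 := mem_ball_zero_iff.1 (hψ1 (hsphere hz))
      exact mul_le_of_le_one_left (by positivity) (pow_le_one₀ (norm_nonneg _) hψz.le)
    rw [circleAverage_norm_sq_tsum_comp hψ hψ1 hψ0 hr ha, Finset.sum_range_succ']
    calc _ ≤ ‖a 0‖ ^ 2 + circleAverage (fun z => ‖∑' n, a (n + 1) * ψ z ^ n‖ ^ 2) 0 r := by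
          gcongr
      _ ≤ _ := by
          have := ih ha'
          simp only [add_assoc] at this
          linarith

lemma circleAverage_norm_sq_tsum_comp_le_tsum_div (hψ : DifferentiableOn ℂ ψ (ball 0 1))
    (hψ1 : MapsTo ψ (ball 0 1) (ball 0 1)) (hψ0 : ψ 0 = 0) (hr : |r| < 1)
    (ha : Summable fun n => ‖a n‖ ^ 2) :
    circleAverage (fun z => ‖∑' n, a n * ψ z ^ n‖ ^ 2) 0 r ≤
      (∑' n, ‖a n‖ ^ 2) / (1 - |r|) ^ 2 := by
  have hsphere : sphere (0 : ℂ) |r| ⊆ ball 0 1 := sphere_subset_ball hr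
  have hcont := (continuousOn_tsum_mul_pow_comp hψ.continuousOn hψ1 ha).mono hsphere
  refine Real.circleAverage_mono_on_of_le_circle (ContinuousOn.circleIntegrable' (by fun_prop))
    fun z hz => ?_
  have hz : ‖z‖ = |r| := mem_sphere_zero_iff_norm.1 hz
  have hschwarz : ‖ψ z‖ ≤ |r| := hz ▸ Complex.norm_le_norm_of_mapsTo_ball hψ
    (hψ1.mono_right ball_subset_closedBall) hψ0 (hz ▸ hr)
  calc ‖∑' n, a n * ψ z ^ n‖ ^ 2 ≤ (√(∑' n, ‖a n‖ ^ 2) / (1 - |r|)) ^ 2 := by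
        gcongr
        exact norm_tsum_mul_pow_le ha hschwarz hr
    _ = (∑' n, ‖a n‖ ^ 2) / (1 - |r|) ^ 2 := by
        rw [div_pow, Real.sq_sqrt (tsum_nonneg fun n => sq_nonneg _)]

lemma circleAverage_norm_sq_tsum_comp_le_tsum (hψ : DifferentiableOn ℂ ψ (ball 0 1))
    (hψ1 : MapsTo ψ (ball 0 1) (ball 0 1)) (hψ0 : ψ 0 = 0) (hr : |r| < 1)
    (ha : Summable fun n => ‖a n‖ ^ 2) :
    circleAverage (fun z => ‖∑' n, a n * ψ z ^ n‖ ^ 2) 0 r ≤ ∑' n, ‖a n‖ ^ 2 := by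
  have hbound : ∀ N : ℕ, circleAverage (fun z => ‖∑' n, a n * ψ z ^ n‖ ^ 2) 0 r ≤
      ∑' n, ‖a n‖ ^ 2 + (∑' n, ‖a (n + N)‖ ^ 2) / (1 - |r|) ^ 2 := fun N =>
    (circleAverage_norm_sq_tsum_comp_le_add hψ hψ1 hψ0 hr ha N).trans <| add_le_add
      (ha.sum_le_tsum _ fun n _ => sq_nonneg _)
      (circleAverage_norm_sq_tsum_comp_le_tsum_div hψ hψ1 hψ0 hr
        ((summable_nat_add_iff N).2 ha))
  have htail : Tendsto (fun N => ∑' n, ‖a n‖ ^ 2 + (∑' n, ‖a (n + N)‖ ^ 2) / (1 - |r|) ^ 2)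
      atTop (𝓝 (∑' n, ‖a n‖ ^ 2 + 0 / (1 - |r|) ^ 2)) :=
    tendsto_const_nhds.add ((tendsto_sum_nat_add fun n => ‖a n‖ ^ 2).div_const _)
  simpa using ge_of_tendsto' htail hbound

theorem tsum_norm_sq_le_of_eqOn_comp (hψ : DifferentiableOn ℂ ψ (ball 0 1))
    (hψ1 : MapsTo ψ (ball 0 1) (ball 0 1)) (hψ0 : ψ 0 = 0) {c : ℕ → ℂ}
    (ha : Summable fun n => ‖a n‖ ^ 2) (hc : Summable fun n => ‖c n‖ ^ 2)
    (heq : ∀ z ∈ ball (0 : ℂ) 1, ∑' n, c n * z ^ n = ∑' n, a n * ψ z ^ n) :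
    ∑' n, ‖c n‖ ^ 2 ≤ ∑' n, ‖a n‖ ^ 2 := by
  refine Real.tsum_le_of_sum_range_le (fun n => sq_nonneg _) fun N => ?_
  have hbound : ∀ r ∈ Ioo (0 : ℝ) 1,
      ∑ n ∈ Finset.range N, ‖c n‖ ^ 2 * r ^ (2 * n) ≤ ∑' n, ‖a n‖ ^ 2 := by
    intro r hr
    have habs : |r| < 1 := abs_lt.2 ⟨by linarith [hr.1], hr.2⟩
    calc _ ≤ circleAverage (fun z => ‖∑' n, c n * z ^ n‖ ^ 2) 0 r :=
          sum_range_norm_sq_mul_pow_le_circleAverage habs hc N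
      _ = circleAverage (fun z => ‖∑' n, a n * ψ z ^ n‖ ^ 2) 0 r :=
          Real.circleAverage_congr_sphere fun z hz => by
            rw [heq z (sphere_subset_ball habs hz)]
      _ ≤ ∑' n, ‖a n‖ ^ 2 := circleAverage_norm_sq_tsum_comp_le_tsum hψ hψ1 hψ0 habs ha
  have hlim : Tendsto (fun r : ℝ => ∑ n ∈ Finset.range N, ‖c n‖ ^ 2 * r ^ (2 * n)) (𝓝[<] 1)
      (𝓝 (∑ n ∈ Finset.range N, ‖c n‖ ^ 2)) := by
    have := ((by fun_prop :
      Continuous fun r : ℝ => ∑ n ∈ Finset.range N, ‖c n‖ ^ 2 * r ^ (2 * n)).tendsto 1)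
    simpa using this.mono_left nhdsWithin_le_nhds
  exact le_of_tendsto hlim (eventually_of_mem (Ioo_mem_nhdsLT zero_lt_one) hbound)

end Subordination

end Littlewood

open Littlewood

lemma hasSum_norm_sq (x : ℓ2) : HasSum (fun n => ‖x n‖ ^ 2) (‖x‖ ^ 2) := by
  simpa [Real.rpow_two] using lp.hasSum_norm (p := 2) (by norm_num) x

lemma summable_norm_aCoef_sq (f : Hh) : Summable fun n => ‖aCoef f n‖ ^ 2 :=
  (hasSum_norm_sq f.fst).summable

lemma summable_norm_bCoef_sq (f : Hh) : Summable fun n => ‖bCoef f n‖ ^ 2 := by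
  refine (hasSum_norm_sq f.snd).summable.congr fun n => ?_
  rw [bCoef, RCLike.norm_conj]
  rfl

lemma norm_sq_eq_tsum_add_tsum (f : Hh) :
    ‖f‖ ^ 2 = ∑' n, ‖aCoef f n‖ ^ 2 + ∑' n, ‖bCoef f n‖ ^ 2 := by
  rw [WithLp.prod_norm_sq_eq_of_L2, ← (hasSum_norm_sq f.fst).tsum_eq,
    ← (hasSum_norm_sq f.snd).tsum_eq]
  congr 1
  refine tsum_congr fun n => ?_
  rw [bCoef, RCLike.norm_conj]
  rfl

lemma norm_aCoef_le (f : Hh) (n : ℕ) : ‖aCoef f n‖ ≤ ‖f‖ :=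
  (lp.norm_apply_le_norm two_ne_zero f.fst n).trans (WithLp.norm_fst_le _ f)

lemma norm_le_of_represents {φ : ℂ → ℂ} (hφ : DifferentiableOn ℂ φ (ball 0 1))
    (hmap : MapsTo φ (ball 0 1) (ball 0 1)) (h0 : φ 0 = 0) {f F : Hh}
    (hF : Represents φ f F) : ‖F‖ ≤ ‖f‖ := by
  have ha := tsum_norm_sq_le_of_eqOn_comp hφ hmap h0 (summable_norm_aCoef_sq f)
    (summable_norm_aCoef_sq F) fun z hz => (hF z hz).1
  have hb := tsum_norm_sq_le_of_eqOn_comp hφ hmap h0 (summable_norm_bCoef_sq f)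
    (summable_norm_bCoef_sq F) fun z hz => (hF z hz).2
  refine pow_le_pow_iff_left₀ (norm_nonneg F) (norm_nonneg f) two_ne_zero |>.1 ?_
  rw [norm_sq_eq_tsum_add_tsum, norm_sq_eq_tsum_add_tsum]
  exact add_le_add ha hb

lemma aCoef_zero_of_represents {φ : ℂ → ℂ} (h0 : φ 0 = 0) {f F : Hh} (hF : Represents φ f F) :
    aCoef F 0 = aCoef f 0 := by
  simpa [h0, tsum_mul_zero_pow] using (hF 0 (mem_ball_self one_pos)).1

def constOne : Hh := (WithLp.equiv 2 (ℓ2 × ℓ2)).symm (lp.single 2 0 1, 0)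

lemma norm_constOne : ‖constOne‖ = 1 := by
  simp [constOne, lp.norm_single]

lemma aCoef_constOne_zero : aCoef constOne 0 = 1 := by
  simp [constOne, aCoef]

/-- If `φ` is an analytic self-map of the unit disc with `φ(0) = 0`, then the
composition operator `C_φ` on `H²ₕ(𝔻)` satisfies `1 ≤ ‖C_φ‖ ≤ 4`. -/
theorem stmt_14 (φ : ℂ → ℂ) (hφ : DifferentiableOn ℂ φ (ball (0 : ℂ) 1))
    (hmap : MapsTo φ (ball (0 : ℂ) 1) (ball (0 : ℂ) 1)) (h0 : φ 0 = 0)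
    (T : Hh →L[ℂ] Hh) (hT : ∀ f : Hh, Represents φ f (T f)) :
    1 ≤ ‖T‖ ∧ ‖T‖ ≤ 4 := by
  have hlower : 1 ≤ ‖T constOne‖ := by
    simpa [aCoef_zero_of_represents h0 (hT constOne), aCoef_constOne_zero] using
      norm_aCoef_le (T constOne) 0
  have hcontraction : ‖T‖ ≤ 1 :=
    T.opNorm_le_bound zero_le_one fun f => by
      simpa using norm_le_of_represents hφ hmap h0 (hT f)
  exact ⟨hlower.trans (T.le_opNorm_of_le norm_constOne.le |>.trans_eq (mul_one _)),
    hcontraction.trans (by norm_num)⟩
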